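/- Suppose η : [x*, 1] → ℝ is differentiable with η(1) = η₀ > 0, η(x) > 0 for all x, and satisfies the differential inequality dη/dx ≤ -(η/x)(1 - δ₀/(x(1+δ₀)-δ₀)) for x ∈ [x*,1], where x* = 3δ₀/(1+δ₀) and 0 < δ₀ < 1. Then for all x ∈ [x*,1], η₀ ≤ η(x)·x²/(x(1+δ₀)-δ₀). -/

import Mathlib

/-!
With `w x = x² / (x(1+δ₀) - δ₀)` one has
`(log w)' = 2/x - (1+δ₀)/(x(1+δ₀) - δ₀) = (1/x)(1 - δ₀/(x(1+δ₀) - δ₀))`,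
so the differential inequality reads `η' ≤ -η (log w)'`, i.e. `(η w)' ≤ 0`.
Hence `η w` is antitone on `[x*, 1]` and is bounded below by its value `η₀` at `1`.
-/

open Set

theorem antitoneOn_mul_of_le_neg_mul_logDeriv {η η' w : ℝ → ℝ} {a b : ℝ}
    (hη : ∀ x ∈ Icc a b, HasDerivAt η (η' x) x)
    (hw : ∀ x ∈ Icc a b, DifferentiableAt ℝ w x)
    (hw_pos : ∀ x ∈ Ioo a b, 0 < w x)
    (hle : ∀ x ∈ Ioo a b, η' x ≤ -η x * logDeriv w x) :
    AntitoneOn (fun x => η x * w x) (Icc a b) := by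
  have hderiv : ∀ x ∈ Icc a b,
      HasDerivAt (fun x => η x * w x) (η' x * w x + η x * deriv w x) x :=
    fun x hx => (hη x hx).mul (hw x hx).hasDerivAt
  refine antitoneOn_of_deriv_nonpos (convex_Icc a b)
    (fun x hx => (hderiv x hx).continuousAt.continuousWithinAt)
    (fun x hx => (hderiv x (interior_subset hx)).differentiableAt.differentiableWithinAt)
    fun x hx => ?_
  rw [interior_Icc] at hx
  have hwx := hw_pos x hx
  have hmul : η' x * w x ≤ -η x * deriv w x := by
    calc η' x * w x ≤ -η x * logDeriv w x * w x := by gcongr; exact hle x hx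
      _ = -η x * deriv w x := by rw [logDeriv_apply]; field_simp
  rw [(hderiv x (Ioo_subset_Icc_self hx)).deriv]
  linarith

theorem logDeriv_sq_div_mul_sub {𝕜 : Type*} [NontriviallyNormedField 𝕜] {c d x : 𝕜}
    (hx : x ≠ 0) (hden : x * c - d ≠ 0) :
    logDeriv (fun y => y ^ 2 / (y * c - d)) x = 1 / x * (1 - d / (x * c - d)) := by
  have hlin : HasDerivAt (fun y => y * c - d) c x := by
    simpa using ((hasDerivAt_id x).mul_const c).sub_const d
  rw [logDeriv_div (f := fun y => y ^ 2) x (pow_ne_zero 2 hx) hden (by fun_prop)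
    hlin.differentiableAt, logDeriv_pow, logDeriv_apply, hlin.deriv]
  field_simp
  ring

theorem gronwall_minkowskian_general (δ₀ η₀ : ℝ) (η η' : ℝ → ℝ)
    (hδ : 0 < δ₀) (hxstar : 3 * δ₀ / (1 + δ₀) ≤ 1)
    (hdiff : ∀ x ∈ Set.Icc (3 * δ₀ / (1 + δ₀)) 1, HasDerivAt η (η' x) x)
    (hη1 : η 1 = η₀)
    (hineq : ∀ x ∈ Set.Icc (3 * δ₀ / (1 + δ₀)) 1,
      η' x ≤ -(η x / x) * (1 - δ₀ / (x * (1 + δ₀) - δ₀))) :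
    ∀ x ∈ Set.Icc (3 * δ₀ / (1 + δ₀)) 1,
      η₀ ≤ η x * x ^ 2 / (x * (1 + δ₀) - δ₀) := by
  have hx_pos : ∀ x ∈ Icc (3 * δ₀ / (1 + δ₀)) 1, 0 < x := fun x hx =>
    (by positivity : 0 < 3 * δ₀ / (1 + δ₀)).trans_le hx.1
  have hden_pos : ∀ x ∈ Icc (3 * δ₀ / (1 + δ₀)) 1, 0 < x * (1 + δ₀) - δ₀ := by
    intro x hx
    have := (div_le_iff₀ (by positivity : (0 : ℝ) < 1 + δ₀)).1 hx.1
    linarith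
  have hanti := antitoneOn_mul_of_le_neg_mul_logDeriv
    (w := fun x => x ^ 2 / (x * (1 + δ₀) - δ₀)) hdiff
    (fun x hx => DifferentiableAt.div (by fun_prop) (by fun_prop) (hden_pos x hx).ne')
    (fun x hx => div_pos (pow_pos (hx_pos x (Ioo_subset_Icc_self hx)) 2)
      (hden_pos x (Ioo_subset_Icc_self hx)))
    fun x hx => by
      have hxI := Ioo_subset_Icc_self hx
      rw [logDeriv_sq_div_mul_sub (hx_pos x hxI).ne' (hden_pos x hxI).ne']
      simpa only [neg_div, div_eq_mul_one_div (η x) x, neg_mul, mul_assoc] using hineq x hxI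
  intro x hx
  simpa only [hη1, mul_div_assoc, one_pow, one_mul, mul_one, add_sub_cancel_right, div_one]
    using hanti hx ⟨hxstar, le_rfl⟩ hx.2

theorem gronwall_minkowskian (δ₀ η₀ : ℝ) (η η' : ℝ → ℝ)
    (hδ : 0 < δ₀) (hδ1 : δ₀ < 1) (hxstar : 3 * δ₀ / (1 + δ₀) ≤ 1)
    (hdiff : ∀ x ∈ Set.Icc (3 * δ₀ / (1 + δ₀)) 1, HasDerivAt η (η' x) x)
    (hη1 : η 1 = η₀) (hη₀ : 0 < η₀)
    (hpos : ∀ x ∈ Set.Icc (3 * δ₀ / (1 + δ₀)) 1, 0 < η x)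
    (hineq : ∀ x ∈ Set.Icc (3 * δ₀ / (1 + δ₀)) 1,
      η' x ≤ -(η x / x) * (1 - δ₀ / (x * (1 + δ₀) - δ₀))) :
    ∀ x ∈ Set.Icc (3 * δ₀ / (1 + δ₀)) 1,
      η₀ ≤ η x * x ^ 2 / (x * (1 + δ₀) - δ₀) :=
  gronwall_minkowskian_general δ₀ η₀ η η' hδ hxstar hdiff hη1 hineq
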